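/- For n ≥ 0, the degenerate poly-Bernoulli number β^{(k)}_{n,λ} equals (1/(n+1)) ∑_{l=0}^{n+1} C(n+1, l) B_l (β^{(k)}_{n+1-l,λ}(1) - β^{(k)}_{n+1-l,λ}), where B_l are the ordinary Bernoulli numbers. -/

import Mathlib

/-!
Since `β^{(k)}_{n,λ}(1) - β^{(k)}_{n,λ}` are the coefficients of `A(t)(e^t - 1)` and
`t / (e^t - 1) · (e^t - 1) = t`, multiplying by the Bernoulli series gives back `t A(t)`;
comparing coefficients of `t^{n+1}` is the identity. Nothing about `A` beyond its being a
power series enters.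
-/

open PowerSeries Finset

/-- The exponential series `e^{xt}`. -/
noncomputable def expS (x : ℚ) : PowerSeries ℚ :=
  PowerSeries.mk fun n => x ^ n / (n.factorial : ℚ)

/-- The degenerate exponential `(1+λt)^{x/λ} = exp((x/λ)log(1+λt))`, whose
`n`-th coefficient is the generalized falling factorial `x(x-λ)⋯(x-(n-1)λ)/n!`. -/
noncomputable def degExp (l x : ℚ) : PowerSeries ℚ :=
  PowerSeries.mk fun n => (∏ i ∈ Finset.range n, (x - (i : ℚ) * l)) / (n.factorial : ℚ)

/-- The polylogarithm `Li_k(X) = ∑_{n ≥ 1} X^n / n^k` as a formal power series. -/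
noncomputable def polylog (k : ℤ) : PowerSeries ℚ :=
  PowerSeries.mk fun n => if n = 0 then 0 else ((n : ℚ) ^ k)⁻¹

/-- Composition `f(g(t))` for `g` with zero constant term. -/
noncomputable def compPS (f g : PowerSeries ℚ) : PowerSeries ℚ :=
  PowerSeries.mk fun n =>
    ∑ m ∈ Finset.range (n + 1), PowerSeries.coeff m f * PowerSeries.coeff n (g ^ m)

/-- Division by `t` (valid for series of order ≥ 1). -/
noncomputable def divT (f : PowerSeries ℚ) : PowerSeries ℚ :=
  PowerSeries.mk fun n => PowerSeries.coeff (n + 1) f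

/-- `A(t) = Li_k(1 - (1+λt)^{-1/λ}) / ((1+λt)^{1/λ} - 1)`. -/
noncomputable def Aser (k : ℤ) (l : ℚ) : PowerSeries ℚ :=
  divT (compPS (polylog k) (1 - degExp l (-1))) * (divT (degExp l 1 - 1))⁻¹

/-- The degenerate poly-Bernoulli polynomial `β^{(k)}_{n,λ}(x)`, defined by
`A(t) e^{xt} = ∑ β^{(k)}_{n,λ}(x) t^n / n!`. -/
noncomputable def dpB (k : ℤ) (l : ℚ) (n : ℕ) (x : ℚ) : ℚ :=
  (n.factorial : ℚ) * PowerSeries.coeff n (Aser k l * expS x)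

section BernoulliInversion

variable {R : Type*} [CommRing R] [Algebra ℚ R]

theorem coeff_eq_sum_bernoulli_mul_coeff_mul_exp_sub_one (A : R⟦X⟧) (n : ℕ) :
    coeff n A = ∑ i ∈ range (n + 2),
      algebraMap ℚ R (bernoulli i / i.factorial) * coeff (n + 1 - i) (A * (exp R - 1)) := by
  have hX : A * X = bernoulliPowerSeries R * (A * (exp R - 1)) := by
    rw [mul_left_comm, bernoulliPowerSeries_mul_exp_sub_one]
  rw [← coeff_succ_mul_X, hX, coeff_mul, Nat.sum_antidiagonal_eq_sum_range_succ_mk]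
  simp [bernoulliPowerSeries]

theorem factorial_succ_mul_coeff_eq_sum_choose_bernoulli (A : R⟦X⟧) (n : ℕ) :
    ((n + 1).factorial : R) * coeff n A = ∑ i ∈ range (n + 2),
      ((n + 1).choose i : R) * algebraMap ℚ R (bernoulli i) *
        ((n + 1 - i).factorial * coeff (n + 1 - i) (A * (exp R - 1))) := by
  rw [coeff_eq_sum_bernoulli_mul_coeff_mul_exp_sub_one, mul_sum]
  refine sum_congr rfl fun i hi => ?_
  have hchoose : ((n + 1).choose i : ℚ) * i.factorial * (n + 1 - i).factorial =
      (n + 1).factorial := by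
    exact_mod_cast Nat.choose_mul_factorial_mul_factorial (by grind : i ≤ n + 1)
  have hfact : ((n + 1).factorial : ℚ) * (bernoulli i / i.factorial) =
      (n + 1).choose i * bernoulli i * (n + 1 - i).factorial := by
    rw [← hchoose]
    field_simp
  rw [← mul_assoc, ← map_natCast (algebraMap ℚ R), ← map_mul, hfact]
  simp only [map_mul, map_natCast]
  ring

end BernoulliInversion

theorem expS_zero : expS 0 = 1 := by
  ext n
  cases n <;> simp [expS, coeff_one]

theorem expS_one : expS 1 = exp ℚ := by
  ext n
  simp [expS, coeff_exp, one_div]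

/-- `β^{(k)}_{n,λ} = (1/(n+1)) ∑_{l=0}^{n+1} C(n+1,l) B_l
    (β^{(k)}_{n+1-l,λ}(1) - β^{(k)}_{n+1-l,λ})`, with `B_l` the Bernoulli numbers. -/
theorem dpB_eq_bernoulli_sum (k : ℤ) (l : ℚ) (n : ℕ) :
    dpB k l n 0 = (1 / (n + 1 : ℚ)) *
      ∑ i ∈ Finset.range (n + 2),
        ((n + 1).choose i : ℚ) * bernoulli i * (dpB k l (n + 1 - i) 1 - dpB k l (n + 1 - i) 0) := by
  have hdiff (m : ℕ) : dpB k l m 1 - dpB k l m 0 =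
      m.factorial * coeff m (Aser k l * (exp ℚ - 1)) := by
    simp only [dpB, expS_zero, expS_one, mul_sub, mul_one, map_sub]
  have hn : (n + 1 : ℚ) ≠ 0 := by positivity
  calc dpB k l n 0 = 1 / (n + 1 : ℚ) * ((n + 1).factorial * coeff n (Aser k l)) := by
        rw [dpB, expS_zero, mul_one, Nat.factorial_succ]
        push_cast
        field_simp
    _ = _ := by
        rw [factorial_succ_mul_coeff_eq_sum_choose_bernoulli]
        simp only [hdiff, Algebra.algebraMap_self, RingHom.id_apply]
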